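/- arXiv:1311.6167 — 4 statements merged into one kernel-verified Lean document; each statement's English description precedes it below -/
import Mathlib

section
/- For every k ∈ ℤ and every n ∈ ℤ, the commutator of the shifted Hilbert transform with the raising operator η₊ on Ω_n satisfies: [H_{(k)}, η₊] u_n = 0 if n ∉ {k−1, k}, [H_{(k)}, η₊] u_k = −i η₊ u_k, and [H_{(k)}, η₊] u_{k−1} = −i η₊ u_{k−1}. -/
/-- Commutator of the shifted Hilbert transform H_{(k)} with the raising
operator η₊ : Ω_n → Ω_{n+1}.  H_{(k)} acts on Ω_l as 0 if l = k, −i·Id if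
l > k, +i·Id if l < k, i.e. as multiplication by −i·sgn(l−k). -/
theorem commutator_Hk_etaPlus
    {V : Type*} [AddCommGroup V] [Module ℂ V]
    (Ω : ℤ → Submodule ℂ V)
    (Hk : ℤ → V →ₗ[ℂ] V)
    (hHk : ∀ (k l : ℤ) (u : V), u ∈ Ω l →
      Hk k u = ((-Complex.I) * (Int.sign (l - k) : ℂ)) • u)
    (ηp : V →ₗ[ℂ] V)
    (hηp : ∀ (n : ℤ) (u : V), u ∈ Ω n → ηp u ∈ Ω (n + 1)) :
    ∀ (k n : ℤ) (u : V), u ∈ Ω n →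
      ((n ≠ k - 1 ∧ n ≠ k → Hk k (ηp u) - ηp (Hk k u) = 0) ∧
       (n = k → Hk k (ηp u) - ηp (Hk k u) = (-Complex.I) • ηp u) ∧
       (n = k - 1 → Hk k (ηp u) - ηp (Hk k u) = (-Complex.I) • ηp u)) := by
  intro k n u hu
  have h1 := hHk k (n + 1) (ηp u) (hηp n u hu)
  have h2 := hHk k n u hu
  have key : Hk k (ηp u) - ηp (Hk k u) =
      ((-Complex.I) * ((Int.sign (n + 1 - k) : ℂ) - (Int.sign (n - k) : ℂ))) • ηp u := by
    rw [h1, h2, map_smul]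
    rw [← sub_smul]
    ring_nf
  refine ⟨?_, ?_, ?_⟩
  · rintro ⟨h1', h2'⟩
    rw [key]
    have hs : Int.sign (n + 1 - k) = Int.sign (n - k) := by
      rcases lt_trichotomy n k with h | h | h
      · have : n < k - 1 ∨ n = k - 1 := by omega
        rcases this with h' | h'
        · rw [Int.sign_eq_neg_one_of_neg (by omega), Int.sign_eq_neg_one_of_neg (by omega)]
        · exact absurd h' h1'
      · exact absurd h h2'
      · rw [Int.sign_eq_one_of_pos (by omega), Int.sign_eq_one_of_pos (by omega)]
    rw [hs]
    simp
  · intro h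
    subst h
    rw [key]
    norm_num
  · intro h
    subst h
    rw [key]
    have e1 : k - 1 + 1 - k = 0 := by ring
    have e2 : k - 1 - k = -1 := by ring
    rw [e1, e2]
    norm_num
end

section
/- For every smooth function u on SM and every k ∈ ℤ, [H_{(k)}, X] u = X_⊥ u_k + (X_⊥ u)_k, where u_k is the k-th Fourier component of u and (·)_k denotes projection onto H_k. -/
/-- Generalized Pestov–Uhlmann commutator formula: [H_{(k)}, X] u = X_⊥ u_k + (X_⊥ u)_k.
Here u is a smooth function on SM, modeled by a finite sum of Fourier modes
c n ∈ Ω_n; X = η₊ + η₋, X_⊥ = (η₊ − η₋)/i = −i(η₊ − η₋); π k is the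
projection onto the k-th Fourier mode. -/
theorem commutator_Hk_X
    {V : Type*} [AddCommGroup V] [Module ℂ V]
    (Ω : ℤ → Submodule ℂ V)
    (Hk : ℤ → V →ₗ[ℂ] V)
    (hHk : ∀ (k l : ℤ) (u : V), u ∈ Ω l →
      Hk k u = ((-Complex.I) * (Int.sign (l - k) : ℂ)) • u)
    (ηp ηm : V →ₗ[ℂ] V)
    (hηp : ∀ (n : ℤ) (u : V), u ∈ Ω n → ηp u ∈ Ω (n + 1))
    (hηm : ∀ (n : ℤ) (u : V), u ∈ Ω n → ηm u ∈ Ω (n - 1))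
    (π : ℤ → V →ₗ[ℂ] V)
    (hπ : ∀ (k l : ℤ) (u : V), u ∈ Ω l → π k u = if l = k then u else 0)
    (X : V →ₗ[ℂ] V) (hX : X = ηp + ηm)
    (Xperp : V →ₗ[ℂ] V) (hXperp : Xperp = (-Complex.I) • (ηp - ηm)) :
    ∀ (k : ℤ) (s : Finset ℤ) (c : ℤ → V), (∀ n, c n ∈ Ω n) →
      ∀ u, u = ∑ n ∈ s, c n →
        Hk k (X u) - X (Hk k u) = Xperp (π k u) + π k (Xperp u) := by
  intro k s c hc u hu
  have single : ∀ (l : ℤ) (v : V), v ∈ Ω l →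
      Hk k (X v) - X (Hk k v) = Xperp (π k v) + π k (Xperp v) := by
    intro l v hv
    have ha := hηp l v hv
    have hb := hηm l v hv
    have e1 : Hk k (ηp v) = ((-Complex.I) * (Int.sign (l + 1 - k) : ℂ)) • ηp v :=
      hHk k (l + 1) _ ha
    have e2 : Hk k (ηm v) = ((-Complex.I) * (Int.sign (l - 1 - k) : ℂ)) • ηm v :=
      hHk k (l - 1) _ hb
    have e0 : Hk k v = ((-Complex.I) * (Int.sign (l - k) : ℂ)) • v := hHk k l v hv
    have p0 : π k v = if l = k then v else 0 := hπ k l v hv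
    have p1 : π k (ηp v) = if l + 1 = k then ηp v else 0 := hπ k (l + 1) _ ha
    have p2 : π k (ηm v) = if l - 1 = k then ηm v else 0 := hπ k (l - 1) _ hb
    subst hX hXperp
    simp only [LinearMap.add_apply, LinearMap.smul_apply, LinearMap.sub_apply,
      map_add, map_smul, map_sub, e0, e1, e2, p0, p1, p2]
    rcases lt_trichotomy l (k - 1) with h | h | h
    · have s0 : Int.sign (l - k) = -1 := Int.sign_eq_neg_one_of_neg (by omega)
      have s1 : Int.sign (l + 1 - k) = -1 := Int.sign_eq_neg_one_of_neg (by omega)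
      have s2 : Int.sign (l - 1 - k) = -1 := Int.sign_eq_neg_one_of_neg (by omega)
      simp only [s0, s1, s2, if_neg (show l ≠ k by omega),
        if_neg (show l + 1 ≠ k by omega), if_neg (show l - 1 ≠ k by omega),
        map_zero, smul_zero, sub_zero, zero_sub, add_zero, zero_add, neg_zero,
        Int.cast_zero, Int.cast_one, Int.cast_neg, mul_zero, mul_one, zero_smul]
      module
    · have s0 : Int.sign (l - k) = -1 := Int.sign_eq_neg_one_of_neg (by omega)
      have s1 : Int.sign (l + 1 - k) = 0 := by rw [show l + 1 - k = 0 by omega]; rfl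
      have s2 : Int.sign (l - 1 - k) = -1 := Int.sign_eq_neg_one_of_neg (by omega)
      simp only [s0, s1, s2, if_neg (show l ≠ k by omega),
        if_pos (show l + 1 = k by omega), if_neg (show l - 1 ≠ k by omega),
        map_zero, smul_zero, sub_zero, zero_sub, add_zero, zero_add, neg_zero,
        Int.cast_zero, Int.cast_one, Int.cast_neg, mul_zero, mul_one, zero_smul]
      module
    · rcases lt_trichotomy l k with h' | h' | h'
      · exact absurd h' (by omega)
      · subst h'
        have s0 : Int.sign (l - l) = 0 := by rw [sub_self]; rfl
        have s1 : Int.sign (l + 1 - l) = 1 := Int.sign_eq_one_of_pos (by omega)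
        have s2 : Int.sign (l - 1 - l) = -1 := Int.sign_eq_neg_one_of_neg (by omega)
        simp only [s0, s1, s2, if_pos rfl, eq_self_iff_true, if_true,
          if_neg (show l + 1 ≠ l by omega), if_neg (show l - 1 ≠ l by omega),
          map_zero, smul_zero, sub_zero, zero_sub, add_zero, zero_add, neg_zero,
          Int.cast_zero, Int.cast_one, Int.cast_neg, mul_zero, mul_one, zero_smul]
        module
      · rcases lt_trichotomy l (k + 1) with h'' | h'' | h''
        · exact absurd h'' (by omega)
        · have s0 : Int.sign (l - k) = 1 := Int.sign_eq_one_of_pos (by omega)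
          have s1 : Int.sign (l + 1 - k) = 1 := Int.sign_eq_one_of_pos (by omega)
          have s2 : Int.sign (l - 1 - k) = 0 := by rw [show l - 1 - k = 0 by omega]; rfl
          simp only [s0, s1, s2, if_neg (show l ≠ k by omega),
            if_neg (show l + 1 ≠ k by omega), if_pos (show l - 1 = k by omega),
            map_zero, smul_zero, sub_zero, zero_sub, add_zero, zero_add, neg_zero,
            Int.cast_zero, Int.cast_one, Int.cast_neg, mul_zero, mul_one, zero_smul]
          module
        · have s0 : Int.sign (l - k) = 1 := Int.sign_eq_one_of_pos (by omega)
          have s1 : Int.sign (l + 1 - k) = 1 := Int.sign_eq_one_of_pos (by omega)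
          have s2 : Int.sign (l - 1 - k) = 1 := Int.sign_eq_one_of_pos (by omega)
          simp only [s0, s1, s2, if_neg (show l ≠ k by omega),
            if_neg (show l + 1 ≠ k by omega), if_neg (show l - 1 ≠ k by omega),
            map_zero, smul_zero, sub_zero, zero_sub, add_zero, zero_add, neg_zero,
            Int.cast_zero, Int.cast_one, Int.cast_neg, mul_zero, mul_one, zero_smul]
          module
  subst hu
  simp only [map_sum, ← Finset.sum_sub_distrib, ← Finset.sum_add_distrib]
  exact Finset.sum_congr rfl fun n _ => single n (c n) (hc n)
end

section
/- For every smooth function u on SM and every k ∈ ℤ, [H_{(k)}, X_⊥] u = −X u_k − (X u)_k. -/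
lemma commutator_Hk_Xperp_mode
    {V : Type*} [AddCommGroup V] [Module ℂ V]
    (Ω : ℤ → Submodule ℂ V)
    (Hk : ℤ → V →ₗ[ℂ] V)
    (hHk : ∀ (k l : ℤ) (u : V), u ∈ Ω l →
      Hk k u = ((-Complex.I) * (Int.sign (l - k) : ℂ)) • u)
    (ηp ηm : V →ₗ[ℂ] V)
    (hηp : ∀ (n : ℤ) (u : V), u ∈ Ω n → ηp u ∈ Ω (n + 1))
    (hηm : ∀ (n : ℤ) (u : V), u ∈ Ω n → ηm u ∈ Ω (n - 1))
    (π : ℤ → V →ₗ[ℂ] V)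
    (hπ : ∀ (k l : ℤ) (u : V), u ∈ Ω l → π k u = if l = k then u else 0)
    (X : V →ₗ[ℂ] V) (hX : X = ηp + ηm)
    (Xperp : V →ₗ[ℂ] V) (hXperp : Xperp = (-Complex.I) • (ηp - ηm))
    (k n : ℤ) (u : V) (hu : u ∈ Ω n) :
    Hk k (Xperp u) - Xperp (Hk k u) = -(X (π k u)) - π k (X u) := by
  have hp := hηp n u hu
  have hm := hηm n u hu
  have h1 : Hk k (ηp u) = ((-Complex.I) * (Int.sign (n + 1 - k) : ℂ)) • ηp u :=
    hHk k (n + 1) (ηp u) hp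
  have h2 : Hk k (ηm u) = ((-Complex.I) * (Int.sign (n - 1 - k) : ℂ)) • ηm u :=
    hHk k (n - 1) (ηm u) hm
  have h3 : Hk k u = ((-Complex.I) * (Int.sign (n - k) : ℂ)) • u := hHk k n u hu
  have h4 : π k u = if n = k then u else 0 := hπ k n u hu
  have h5 : π k (ηp u) = if n + 1 = k then ηp u else 0 := hπ k (n + 1) (ηp u) hp
  have h6 : π k (ηm u) = if n - 1 = k then ηm u else 0 := hπ k (n - 1) (ηm u) hm
  subst hX hXperp
  simp only [LinearMap.smul_apply, LinearMap.sub_apply, LinearMap.add_apply,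
    map_smul, map_sub, map_add, h1, h2, h3, h4, h5, h6, smul_sub, smul_smul]
  rcases lt_trichotomy (n - k) 0 with h | h | h
  · rcases eq_or_lt_of_le (Int.lt_iff_add_one_le.mp h) with h' | h'
    · -- n - k = -1, i.e. n + 1 = k
      have e1 : n + 1 = k := by omega
      have s1 : (n + 1 - k).sign = 0 := Int.sign_eq_zero_iff_zero.mpr (by omega)
      have s2 : (n - k).sign = -1 := Int.sign_eq_neg_one_iff_neg.mpr h
      have s3 : (n - 1 - k).sign = -1 := Int.sign_eq_neg_one_iff_neg.mpr (by omega)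
      rw [s1, s2, s3, if_pos e1, if_neg (by omega : ¬ n = k), if_neg (by omega : ¬ n - 1 = k)]
      push_cast
      simp [smul_smul, Complex.I_mul_I]
      module
    · -- n - k ≤ -2
      have s1 : (n + 1 - k).sign = -1 := Int.sign_eq_neg_one_iff_neg.mpr (by omega)
      have s2 : (n - k).sign = -1 := Int.sign_eq_neg_one_iff_neg.mpr h
      have s3 : (n - 1 - k).sign = -1 := Int.sign_eq_neg_one_iff_neg.mpr (by omega)
      rw [s1, s2, s3, if_neg (by omega : ¬ n + 1 = k), if_neg (by omega : ¬ n = k),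
        if_neg (by omega : ¬ n - 1 = k)]
      push_cast
      simp [smul_smul, Complex.I_mul_I]
  · -- n = k
    have e1 : n = k := by omega
    have s1 : (n + 1 - k).sign = 1 := Int.sign_eq_one_iff_pos.mpr (by omega)
    have s2 : (n - k).sign = 0 := Int.sign_eq_zero_iff_zero.mpr (by omega)
    have s3 : (n - 1 - k).sign = -1 := Int.sign_eq_neg_one_iff_neg.mpr (by omega)
    rw [s1, s2, s3, if_neg (by omega : ¬ n + 1 = k), if_pos e1,
      if_neg (by omega : ¬ n - 1 = k)]
    push_cast
    simp [smul_smul, Complex.I_mul_I]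
    module
  · rcases eq_or_lt_of_le (Int.lt_iff_add_one_le.mp h) with h' | h'
    · -- n - k = 1, i.e. n - 1 = k
      have e1 : n - 1 = k := by omega
      have s1 : (n + 1 - k).sign = 1 := Int.sign_eq_one_iff_pos.mpr (by omega)
      have s2 : (n - k).sign = 1 := Int.sign_eq_one_iff_pos.mpr h
      have s3 : (n - 1 - k).sign = 0 := Int.sign_eq_zero_iff_zero.mpr (by omega)
      rw [s1, s2, s3, if_neg (by omega : ¬ n + 1 = k), if_neg (by omega : ¬ n = k), if_pos e1]
      push_cast
      simp [smul_smul, Complex.I_mul_I]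
    · -- n - k ≥ 2
      have s1 : (n + 1 - k).sign = 1 := Int.sign_eq_one_iff_pos.mpr (by omega)
      have s2 : (n - k).sign = 1 := Int.sign_eq_one_iff_pos.mpr h
      have s3 : (n - 1 - k).sign = 1 := Int.sign_eq_one_iff_pos.mpr (by omega)
      rw [s1, s2, s3, if_neg (by omega : ¬ n + 1 = k), if_neg (by omega : ¬ n = k),
        if_neg (by omega : ¬ n - 1 = k)]
      push_cast
      simp [smul_smul, Complex.I_mul_I]

/-- Generalized Pestov–Uhlmann commutator formula: [H_{(k)}, X_⊥] u = −X u_k − (X u)_k.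
Here u is a smooth function on SM, modeled by a finite sum of Fourier modes
c n ∈ Ω_n; X = η₊ + η₋, X_⊥ = (η₊ − η₋)/i = −i(η₊ − η₋); π k is the
projection onto the k-th Fourier mode. -/
theorem commutator_Hk_Xperp
    {V : Type*} [AddCommGroup V] [Module ℂ V]
    (Ω : ℤ → Submodule ℂ V)
    (Hk : ℤ → V →ₗ[ℂ] V)
    (hHk : ∀ (k l : ℤ) (u : V), u ∈ Ω l →
      Hk k u = ((-Complex.I) * (Int.sign (l - k) : ℂ)) • u)
    (ηp ηm : V →ₗ[ℂ] V)
    (hηp : ∀ (n : ℤ) (u : V), u ∈ Ω n → ηp u ∈ Ω (n + 1))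
    (hηm : ∀ (n : ℤ) (u : V), u ∈ Ω n → ηm u ∈ Ω (n - 1))
    (π : ℤ → V →ₗ[ℂ] V)
    (hπ : ∀ (k l : ℤ) (u : V), u ∈ Ω l → π k u = if l = k then u else 0)
    (X : V →ₗ[ℂ] V) (hX : X = ηp + ηm)
    (Xperp : V →ₗ[ℂ] V) (hXperp : Xperp = (-Complex.I) • (ηp - ηm)) :
    ∀ (k : ℤ) (s : Finset ℤ) (c : ℤ → V), (∀ n, c n ∈ Ω n) →
      ∀ u, u = ∑ n ∈ s, c n →
        Hk k (Xperp u) - Xperp (Hk k u) = -(X (π k u)) - π k (X u) := by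
  intro k s c hc u hu
  subst hu
  simp only [map_sum, ← Finset.sum_sub_distrib, ← Finset.sum_neg_distrib]
  refine Finset.sum_congr rfl fun n _ => ?_
  exact commutator_Hk_Xperp_mode Ω Hk hHk ηp ηm hηp hηm π hπ X hX Xperp hXperp k n (c n) (hc n)
end

section
/- (Jacobi variation of the tangent angle.) Along a unit-speed geodesic γ in an isotropic metric e^{2λ}(dx² + dy²), with tangent angle α(t) = arg(γ̇(t)) and Jacobi field coefficients a, b defined by X_⊥γ = a γ̇^⊥ and ∂_θγ = b γ̇^⊥, one has X_⊥α = ȧ − a ∂_t(λ∘γ) and ∂_θα = ḃ − b ∂_t(λ∘γ). -/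
private lemma mixed_partial {F : ℝ × ℝ → ℝ × ℝ} (hF : ContDiff ℝ 2 F)
    {V : ℝ × ℝ → ℝ × ℝ} (hV : ∀ s u : ℝ, HasDerivAt (fun u' => F (s, u')) (V (s, u)) u)
    {W : ℝ → ℝ × ℝ} (hW : ∀ u : ℝ, HasDerivAt (fun s => F (s, u)) (W u) 0)
    {t : ℝ} {W' : ℝ × ℝ} (hW' : HasDerivAt W W' t)
    {Vs : ℝ × ℝ} (hVs : HasDerivAt (fun s => V (s, t)) Vs 0) :
    Vs = W' := by
  have hFd : Differentiable ℝ F := hF.differentiable (by norm_num)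
  have hG : ContDiff ℝ 1 (fderiv ℝ F) := hF.fderiv_right (by norm_num)
  have hGd : Differentiable ℝ (fderiv ℝ F) := hG.differentiable (by norm_num)
  set G := fderiv ℝ F with hGdef
  set x : ℝ × ℝ := (0, t) with hx
  set G'' := fderiv ℝ G x with hG''def
  have hG'' : HasFDerivAt G G'' x := (hGd x).hasFDerivAt
  have hst : ∀ s u : ℝ, HasDerivAt (fun u' : ℝ => ((s, u') : ℝ × ℝ)) ((0 : ℝ), (1 : ℝ)) u :=
    fun s u => (hasDerivAt_const u s).prodMk (hasDerivAt_id u)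
  have hts : ∀ u : ℝ, HasDerivAt (fun s : ℝ => ((s, u) : ℝ × ℝ)) ((1 : ℝ), (0 : ℝ)) 0 :=
    fun u => (hasDerivAt_id 0).prodMk (hasDerivAt_const 0 u)
  have hVval : ∀ s u : ℝ, V (s, u) = G (s, u) (0, 1) := by
    intro s u
    exact (hV s u).unique ((hFd (s, u)).hasFDerivAt.comp_hasDerivAt u (hst s u))
  have hWval : ∀ u : ℝ, W u = G (0, u) (1, 0) := by
    intro u
    exact (hW u).unique ((hFd (0, u)).hasFDerivAt.comp_hasDerivAt 0 (hts u))
  -- derivative of s ↦ V (s, t)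
  have hc : HasDerivAt (fun s : ℝ => G (s, t)) (G'' (1, 0)) 0 :=
    hG''.comp_hasDerivAt 0 (hts t)
  have h1 : HasDerivAt (fun s : ℝ => G (s, t) ((0 : ℝ), (1 : ℝ))) (G'' (1, 0) (0, 1)) 0 := by
    have := hc.clm_apply (hasDerivAt_const (0:ℝ) (((0 : ℝ), (1 : ℝ)) : ℝ × ℝ))
    simpa using this
  have hVs2 : HasDerivAt (fun s => V (s, t)) (G'' (1, 0) (0, 1)) 0 := by
    have heq : (fun s => V (s, t)) = fun s : ℝ => G (s, t) ((0 : ℝ), (1 : ℝ)) :=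
      funext fun s => hVval s t
    rw [heq]; exact h1
  -- derivative of W at t
  have hc2 : HasDerivAt (fun u : ℝ => G (0, u)) (G'' (0, 1)) t :=
    hG''.comp_hasDerivAt t (hst 0 t)
  have h2 : HasDerivAt (fun u : ℝ => G (0, u) ((1 : ℝ), (0 : ℝ))) (G'' (0, 1) (1, 0)) t := by
    have := hc2.clm_apply (hasDerivAt_const t (((1 : ℝ), (0 : ℝ)) : ℝ × ℝ))
    simpa using this
  have hW2 : HasDerivAt W (G'' (0, 1) (1, 0)) t := by
    have heq : W = fun u : ℝ => G (0, u) ((1 : ℝ), (0 : ℝ)) := funext hWval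
    rw [heq]; exact h2
  have hsym := second_derivative_symmetric (fun y => (hFd y).hasFDerivAt) hG''
    ((1 : ℝ), (0 : ℝ)) ((0 : ℝ), (1 : ℝ))
  calc Vs = G'' (1, 0) (0, 1) := hVs.unique hVs2
    _ = G'' (0, 1) (1, 0) := hsym
    _ = W' := (hW2.unique hW').symm ▸ rfl

private lemma key_variation
    (lam : ℝ × ℝ → ℝ) (dlam : ℝ × ℝ → ℝ × ℝ)
    (hlam : ∀ p, HasFDerivAt lam
      ((dlam p).1 • ContinuousLinearMap.fst ℝ ℝ ℝ +
       (dlam p).2 • ContinuousLinearMap.snd ℝ ℝ ℝ) p)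
    (γ : ℝ → ℝ × ℝ) (α : ℝ → ℝ) (lamγ' : ℝ → ℝ)
    (hlamγ : ∀ t, HasDerivAt (fun u => lam (γ u)) (lamγ' t) t)
    (a a' : ℝ → ℝ) (ha : ∀ t, HasDerivAt a (a' t) t)
    (Γ : ℝ → ℝ → ℝ × ℝ) (A : ℝ → ℝ → ℝ)
    (hΓC2 : ContDiff ℝ 2 (fun p : ℝ × ℝ => Γ p.1 p.2))
    (hAC2 : ContDiff ℝ 2 (fun p : ℝ × ℝ => A p.1 p.2))
    (hgeo1 : ∀ s t, HasDerivAt (fun u => Γ s u)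
      (Real.exp (-(lam (Γ s t))) • (Real.cos (A s t), Real.sin (A s t))) t)
    (hgeo2 : ∀ s t, HasDerivAt (fun u => A s u)
      (Real.exp (-(lam (Γ s t))) *
        (-(Real.sin (A s t)) * (dlam (Γ s t)).1 +
          Real.cos (A s t) * (dlam (Γ s t)).2)) t)
    (hbase : ∀ t, Γ 0 t = γ t ∧ A 0 t = α t)
    (hvar : ∀ t, HasDerivAt (fun s => Γ s t)
      (a t • (Real.exp (-(lam (γ t))) • (-(Real.sin (α t)), Real.cos (α t)))) 0) :
    ∀ t, HasDerivAt (fun s => A s t) (a' t - a t * lamγ' t) 0 := by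
  intro t
  set cs := Real.cos (α t) with hcs
  set sn := Real.sin (α t) with hsn
  set E := Real.exp (-(lam (γ t))) with hE
  set d1 := (dlam (γ t)).1 with hd1
  set d2 := (dlam (γ t)).2 with hd2
  set L := lamγ' t with hL
  have hΓ0 : ∀ u, Γ 0 u = γ u := fun u => (hbase u).1
  have hA0 : ∀ u, A 0 u = α u := fun u => (hbase u).2
  -- derivative of α
  have hα : HasDerivAt α (E * (-sn * d1 + cs * d2)) t := by
    have h := hgeo2 0 t
    have heq : (fun u => A 0 u) = α := funext hA0
    rw [heq, hΓ0 t, hA0 t] at h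
    exact h
  -- derivative in s of A at s = 0 (exists by smoothness)
  have hAdiff : DifferentiableAt ℝ (fun s => A s t) 0 := by
    have h1 : DifferentiableAt ℝ (fun p : ℝ × ℝ => A p.1 p.2) ((0 : ℝ), t) :=
      (hAC2.differentiable (by norm_num)) _
    have h2 : DifferentiableAt ℝ (fun s : ℝ => ((s, t) : ℝ × ℝ)) 0 :=
      differentiableAt_id.prodMk (differentiableAt_const t)
    exact h1.comp 0 h2
  set m := deriv (fun s => A s t) 0 with hm
  have hAs : HasDerivAt (fun s => A s t) m 0 := hAdiff.hasDerivAt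
  -- derivative in s of Γ at s = 0
  have hΓs : HasDerivAt (fun s => Γ s t) (a t • (E • (-sn, cs))) 0 := hvar t
  -- derivative in s of lam ∘ Γ at s = 0
  have hlams : HasDerivAt (fun s => lam (Γ s t)) (a t * (E * (-sn * d1 + cs * d2))) 0 := by
    have hlamΓ : HasFDerivAt lam
        ((dlam (γ t)).1 • ContinuousLinearMap.fst ℝ ℝ ℝ +
         (dlam (γ t)).2 • ContinuousLinearMap.snd ℝ ℝ ℝ) (Γ 0 t) := by
      rw [hΓ0 t]; exact hlam (γ t)
    have h := hlamΓ.comp_hasDerivAt 0 hΓs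
    have hval : ((dlam (γ t)).1 • ContinuousLinearMap.fst ℝ ℝ ℝ +
         (dlam (γ t)).2 • ContinuousLinearMap.snd ℝ ℝ ℝ) (a t • (E • (-sn, cs)))
        = a t * (E * (-sn * d1 + cs * d2)) := by
      simp [Prod.smul_mk, smul_eq_mul, hd1, hd2]
      ring
    rw [hval] at h
    exact h
  -- derivative in s of V (s, t) := exp(-(lam (Γ s t))) • (cos (A s t), sin (A s t))
  have hexp : HasDerivAt (fun s => Real.exp (-(lam (Γ s t))))
      (E * -(a t * (E * (-sn * d1 + cs * d2)))) 0 := by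
    have h := hlams.neg.exp
    simp only [Pi.neg_apply, hΓ0] at h
    exact h
  have hcos : HasDerivAt (fun s => Real.cos (A s t)) (-sn * m) 0 := by
    have h := hAs.cos
    simp only [hA0] at h
    exact h
  have hsin : HasDerivAt (fun s => Real.sin (A s t)) (cs * m) 0 := by
    have h := hAs.sin
    simp only [hA0] at h
    exact h
  have hVs : HasDerivAt (fun s => Real.exp (-(lam (Γ s t))) • ((Real.cos (A s t), Real.sin (A s t)) : ℝ × ℝ))
      (E • ((-sn * m, cs * m) : ℝ × ℝ) +
        (E * -(a t * (E * (-sn * d1 + cs * d2)))) • ((cs, sn) : ℝ × ℝ)) 0 := by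
    have h := hexp.smul (hcos.prodMk hsin)
    simp only [hΓ0, hA0] at h
    exact h
  -- derivative in t of W u := a u • (exp(-(lam (γ u))) • (-(sin (α u)), cos (α u)))
  have hEder : HasDerivAt (fun u => Real.exp (-(lam (γ u)))) (E * -L) t := by
    have h := (hlamγ t).neg.exp
    exact h
  have hpair2 : HasDerivAt (fun u => ((-(Real.sin (α u)), Real.cos (α u)) : ℝ × ℝ))
      (-(cs * (E * (-sn * d1 + cs * d2))), -sn * (E * (-sn * d1 + cs * d2))) t :=
    (hα.sin.neg).prodMk hα.cos
  have hinner : HasDerivAt (fun u => Real.exp (-(lam (γ u))) • ((-(Real.sin (α u)), Real.cos (α u)) : ℝ × ℝ))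
      (E • ((-(cs * (E * (-sn * d1 + cs * d2))), -sn * (E * (-sn * d1 + cs * d2))) : ℝ × ℝ) +
        (E * -L) • ((-sn, cs) : ℝ × ℝ)) t := hEder.smul hpair2
  have hW' : HasDerivAt (fun u => a u • (Real.exp (-(lam (γ u))) • ((-(Real.sin (α u)), Real.cos (α u)) : ℝ × ℝ)))
      (a t • (E • ((-(cs * (E * (-sn * d1 + cs * d2))), -sn * (E * (-sn * d1 + cs * d2))) : ℝ × ℝ) +
        (E * -L) • ((-sn, cs) : ℝ × ℝ)) + a' t • (E • ((-sn, cs) : ℝ × ℝ))) t :=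
    (ha t).smul hinner
  -- equate mixed partials
  have heq := mixed_partial (F := fun p : ℝ × ℝ => Γ p.1 p.2)
    (V := fun p : ℝ × ℝ => Real.exp (-(lam (Γ p.1 p.2))) • ((Real.cos (A p.1 p.2), Real.sin (A p.1 p.2)) : ℝ × ℝ))
    (W := fun u => a u • (Real.exp (-(lam (γ u))) • ((-(Real.sin (α u)), Real.cos (α u)) : ℝ × ℝ)))
    hΓC2 (fun s u => hgeo1 s u) (fun u => hvar u) hW' hVs
  -- extract components and solve for m
  have h1 := congrArg Prod.fst heq
  have h2 := congrArg Prod.snd heq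
  simp only [Prod.fst_add, Prod.snd_add, Prod.smul_mk, Prod.mk_add_mk, smul_eq_mul] at h1 h2
  have hpy : sn ^ 2 + cs ^ 2 = 1 := Real.sin_sq_add_cos_sq (α t)
  have hEpos : (0 : ℝ) < E := Real.exp_pos _
  have hmX : m = a' t - a t * L := by
    have g1 : E * (sn * (m - (a' t - a t * L))) = 0 := by linear_combination -h1
    have g2 : E * (cs * (m - (a' t - a t * L))) = 0 := by linear_combination h2
    have g3 : E * (m - (a' t - a t * L)) = 0 := by
      linear_combination sn * g1 + cs * g2 - (E * (m - (a' t - a t * L))) * hpy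
    rcases mul_eq_zero.mp g3 with h | h
    · exact absurd h (ne_of_gt hEpos)
    · linarith
  rw [hL] at hmX
  rw [← hmX]
  exact hAs

/-- Jacobi variation of the tangent angle.  In global isothermal coordinates
with metric e^{2λ}(dx²+dy²), a unit-speed geodesic with tangent angle A
satisfies γ̇ = e^{−λ}(cos A, sin A) and Ȧ = e^{−λ}(−sin A ∂ₓλ + cos A ∂_yλ).
For a C² variation through geodesics of the base geodesic γ (with angle α)
whose variation field at s = 0 is c·γ̇^⊥ (c = a for the X_⊥-variation,
c = b for the ∂_θ-variation, γ̇^⊥ = e^{−λ}(−sin α, cos α)), the variation of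
the angle is ∂ₛA|₀ = ċ − c·∂ₜ(λ∘γ).  This yields both X_⊥α = ȧ − a∂ₜλ_γ and
∂_θα = ḃ − b∂ₜλ_γ. -/
theorem jacobi_variation_of_angle
    (lam : ℝ × ℝ → ℝ) (dlam : ℝ × ℝ → ℝ × ℝ)
    (hlam : ∀ p, HasFDerivAt lam
      ((dlam p).1 • ContinuousLinearMap.fst ℝ ℝ ℝ +
       (dlam p).2 • ContinuousLinearMap.snd ℝ ℝ ℝ) p)
    (γ : ℝ → ℝ × ℝ) (α : ℝ → ℝ)
    (lamγ' : ℝ → ℝ)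
    (hlamγ : ∀ t, HasDerivAt (fun u => lam (γ u)) (lamγ' t) t)
    (a b a' b' : ℝ → ℝ)
    (ha : ∀ t, HasDerivAt a (a' t) t)
    (hb : ∀ t, HasDerivAt b (b' t) t)
    (Γa Γb : ℝ → ℝ → ℝ × ℝ) (Aa Ab : ℝ → ℝ → ℝ)
    (hΓaC2 : ContDiff ℝ 2 (fun p : ℝ × ℝ => Γa p.1 p.2))
    (hΓbC2 : ContDiff ℝ 2 (fun p : ℝ × ℝ => Γb p.1 p.2))
    (hAaC2 : ContDiff ℝ 2 (fun p : ℝ × ℝ => Aa p.1 p.2))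
    (hAbC2 : ContDiff ℝ 2 (fun p : ℝ × ℝ => Ab p.1 p.2))
    -- each Γ(s,·) is a unit-speed geodesic with tangent angle A(s,·):
    (hgeo1a : ∀ s t, HasDerivAt (fun u => Γa s u)
      (Real.exp (-(lam (Γa s t))) • (Real.cos (Aa s t), Real.sin (Aa s t))) t)
    (hgeo2a : ∀ s t, HasDerivAt (fun u => Aa s u)
      (Real.exp (-(lam (Γa s t))) *
        (-(Real.sin (Aa s t)) * (dlam (Γa s t)).1 +
          Real.cos (Aa s t) * (dlam (Γa s t)).2)) t)
    (hgeo1b : ∀ s t, HasDerivAt (fun u => Γb s u)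
      (Real.exp (-(lam (Γb s t))) • (Real.cos (Ab s t), Real.sin (Ab s t))) t)
    (hgeo2b : ∀ s t, HasDerivAt (fun u => Ab s u)
      (Real.exp (-(lam (Γb s t))) *
        (-(Real.sin (Ab s t)) * (dlam (Γb s t)).1 +
          Real.cos (Ab s t) * (dlam (Γb s t)).2)) t)
    -- both variations have base geodesic γ with angle α:
    (hbasea : ∀ t, Γa 0 t = γ t ∧ Aa 0 t = α t)
    (hbaseb : ∀ t, Γb 0 t = γ t ∧ Ab 0 t = α t)
    -- variation fields at s = 0: X_⊥γ = a γ̇^⊥ and ∂_θγ = b γ̇^⊥: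
    (hvara : ∀ t, HasDerivAt (fun s => Γa s t)
      (a t • (Real.exp (-(lam (γ t))) • (-(Real.sin (α t)), Real.cos (α t)))) 0)
    (hvarb : ∀ t, HasDerivAt (fun s => Γb s t)
      (b t • (Real.exp (-(lam (γ t))) • (-(Real.sin (α t)), Real.cos (α t)))) 0) :
    ∀ t, HasDerivAt (fun s => Aa s t) (a' t - a t * lamγ' t) 0 ∧
         HasDerivAt (fun s => Ab s t) (b' t - b t * lamγ' t) 0 := by
  intro t
  exact ⟨key_variation lam dlam hlam γ α lamγ' hlamγ a a' ha Γa Aa hΓaC2 hAaC2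
      hgeo1a hgeo2a hbasea hvara t,
    key_variation lam dlam hlam γ α lamγ' hlamγ b b' hb Γb Ab hΓbC2 hAbC2
      hgeo1b hgeo2b hbaseb hvarb t⟩
end
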